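/- Let $n \geq 2$ be even, $c > n/2$ an integer, and $(h_k)$ a finitely supported sequence of naturals with $h_k = 0$ unless $0 \leq k \leq 2n$, $h_k = h_{2n-k}$, and $h_k = 0$ for odd $k$. Define $b_* = \sum_{m\in\mathbb{N}} h_{*-2mc+n}$ and $r = \sum_k h_k$. Then for every $s \in \mathbb{N}$ with $2sc > 2n$, $\sum_{m=2c-n}^{2sc+1} b_m = s r - (r - h_n)/2$. -/

import Mathlib

/-!
Write `r = ∑ h` and `T = ∑_{k ≤ n} h k`. Summing the series defining `b` over the degrees
`2c - n, …, 2sc + 1` and exchanging the two sums, the `j`-th shift of `h` contributes the sum of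
`h` over `[-2jc, 2(s - 1 - j)c + n + 1]`. Since `2c ≥ n + 2` (`n` is even), this window contains
the support `[0, 2n]` for `j < s - 1`, it is `(-∞, n + 1]` for `j = s - 1`, contributing `T`
because `h (n + 1) = 0`, and it misses the support for `j ≥ s`. So the sum is `(s - 1) r + T`,
and Poincaré duality `h k = h (2n - k)` gives `2T = r + h n`.
-/

open Finset

section

variable {M : Type*} [AddCommMonoid M]

theorem Finset.sum_Icc_comp_add_right (f : ℤ → M) (a b d : ℤ) :
    ∑ m ∈ Icc a b, f (m + d) = ∑ k ∈ Icc (a + d) (b + d), f k := by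
  rw [← map_add_right_Icc, sum_map]
  rfl

theorem Finset.sum_Icc_eq_sum_Icc_of_lt_eq_zero {f : ℤ → M} {a lo : ℤ} (b : ℤ)
    (hf : ∀ k < lo, f k = 0) (ha : a ≤ lo) :
    ∑ k ∈ Icc a b, f k = ∑ k ∈ Icc lo b, f k := by
  refine (sum_subset (Icc_subset_Icc_left ha) fun k hk hk' => hf k ?_).symm
  simp only [mem_Icc] at hk hk'
  omega

theorem Finset.sum_Icc_eq_sum_Icc_of_gt_eq_zero {f : ℤ → M} {b hi : ℤ} (a : ℤ)
    (hf : ∀ k, hi < k → f k = 0) (hb : hi ≤ b) :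
    ∑ k ∈ Icc a b, f k = ∑ k ∈ Icc a hi, f k := by
  refine (sum_subset (Icc_subset_Icc_right hb) fun k hk hk' => hf k ?_).symm
  simp only [mem_Icc] at hk hk'
  omega

theorem Finset.sum_Ioc_eq_sum_Ico_of_palindromic {f : ℤ → M} {n : ℤ}
    (hf : ∀ k, f k = f (2 * n - k)) :
    ∑ k ∈ Ioc n (2 * n), f k = ∑ k ∈ Ico 0 n, f k := by
  refine sum_nbij' (2 * n - ·) (2 * n - ·) ?_ ?_ (fun _ _ => by ring) (fun _ _ => by ring)
    fun k _ => hf k <;>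
  · intro k hk
    simp only [mem_Ioc, mem_Ico] at hk ⊢
    omega

theorem Finset.sum_Icc_add_sum_Icc_of_palindromic {f : ℤ → M} {n : ℤ} (hn : 0 ≤ n)
    (hf : ∀ k, f k = f (2 * n - k)) :
    ∑ k ∈ Icc 0 n, f k + ∑ k ∈ Icc 0 n, f k = ∑ k ∈ Icc 0 (2 * n), f k + f n := by
  have hsplit :
      ∑ k ∈ Icc 0 (2 * n), f k = ∑ k ∈ Icc 0 n, f k + ∑ k ∈ Ioc n (2 * n), f k := by
    rw [← sum_union <| disjoint_left.2 fun k hk hk' => by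
      simp only [mem_Icc, mem_Ioc] at hk hk'
      omega]
    congr 1
    ext k
    simp only [mem_Icc, mem_union, mem_Ioc]
    omega
  rw [hsplit, sum_Ioc_eq_sum_Ico_of_palindromic hf, add_assoc, Icc_eq_cons_Ico hn, sum_cons,
    add_comm (f n)]

theorem tsum_shift_eq_sum_range [TopologicalSpace M] {f : ℤ → M} (hf : ∀ k < 0, f k = 0)
    {c n s : ℕ} {x : ℤ} (hx : x + n < 2 * ((s : ℤ) + 1) * c) :
    ∑' j : ℕ, f (x - 2 * ((j : ℤ) + 1) * c + n) =
      ∑ j ∈ range s, f (x - 2 * ((j : ℤ) + 1) * c + n) := by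
  refine tsum_eq_sum fun j hj => hf _ ?_
  have hsj : (s : ℤ) ≤ j := by exact_mod_cast not_lt.1 (mem_range.not.1 hj)
  nlinarith [c.cast_nonneg (α := ℤ)]

theorem sum_Icc_sum_range_shift_eq {f : ℤ → M} {c n : ℕ}
    (hsupp : ∀ k, (k < 0 ∨ 2 * (n : ℤ) < k) → f k = 0) (hodd : f (n + 1) = 0)
    (hc : n + 2 ≤ 2 * c) (t : ℕ) :
    ∑ m ∈ Icc (2 * (c : ℤ) - n) (2 * ((t : ℤ) + 1) * c + 1),
        ∑ j ∈ range (t + 1), f (m - 2 * ((j : ℤ) + 1) * c + n) =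
      t • ∑ k ∈ Icc 0 (2 * (n : ℤ)), f k + ∑ k ∈ Icc 0 (n : ℤ), f k := by
  have hshift (j : ℕ) :
      ∑ m ∈ Icc (2 * (c : ℤ) - n) (2 * ((t : ℤ) + 1) * c + 1),
          f (m - 2 * ((j : ℤ) + 1) * c + n) =
        ∑ k ∈ Icc (-(2 * (j : ℤ) * c)) (2 * ((t : ℤ) - j) * c + n + 1), f k := by
    convert sum_Icc_comp_add_right f _ _ (n - 2 * ((j : ℤ) + 1) * c) using 2 <;> ring_nf
  have hneg : ∀ k < 0, f k = 0 := fun k hk => hsupp k (Or.inl hk)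
  have hc0 : (0 : ℤ) ≤ c := c.cast_nonneg
  have hfull (j : ℕ) (hj : j < t) :
      ∑ k ∈ Icc (-(2 * (j : ℤ) * c)) (2 * ((t : ℤ) - j) * c + n + 1), f k =
        ∑ k ∈ Icc 0 (2 * (n : ℤ)), f k := by
    have hj' : (j : ℤ) + 1 ≤ t := by exact_mod_cast hj
    rw [sum_Icc_eq_sum_Icc_of_lt_eq_zero _ hneg (by nlinarith [j.cast_nonneg (α := ℤ)]),
      sum_Icc_eq_sum_Icc_of_gt_eq_zero _ (fun k hk => hsupp k (Or.inr hk)) (by nlinarith)]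
  have hlast : ∑ k ∈ Icc (-(2 * (t : ℤ) * c)) (2 * ((t : ℤ) - t) * c + n + 1), f k =
      ∑ k ∈ Icc 0 (n : ℤ), f k := by
    rw [sum_Icc_eq_sum_Icc_of_lt_eq_zero _ hneg (by nlinarith [t.cast_nonneg (α := ℤ)]),
      sub_self, mul_zero, zero_mul, zero_add, Icc_eq_cons_Ico (by positivity), sum_cons, hodd,
      zero_add, Ico_add_one_right_eq_Icc]
  rw [sum_comm, sum_range_succ, sum_congr rfl fun j _ => hshift j, hshift, hlast,
    sum_congr rfl fun j hj => hfull j (mem_range.1 hj), sum_const, card_range]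

end

theorem stmt_2_general (n c s : ℕ) (hneven : Even n) (hc : n < 2 * c)
    (h : ℤ → ℕ) (b : ℤ → ℕ)
    (hsupp : ∀ k : ℤ, (k < 0 ∨ (2 * (n : ℤ)) < k) → h k = 0)
    (hdual : ∀ k : ℤ, h k = h (2 * (n : ℤ) - k))
    (hlac : ∀ k : ℤ, Odd k → h k = 0)
    (hb : ∀ x : ℤ, b x = ∑' m : ℕ, h (x - 2 * ((m : ℤ) + 1) * (c : ℤ) + (n : ℤ)))
    (hs : 2 * n < 2 * s * c) :
    ((∑ m ∈ Finset.Icc (2 * (c : ℤ) - (n : ℤ)) (2 * (s : ℤ) * (c : ℤ) + 1), b m : ℕ) : ℚ) =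
      (s : ℚ) * (∑ k ∈ Finset.Icc (0 : ℤ) (2 * (n : ℤ)), h k : ℕ) -
        (((∑ k ∈ Finset.Icc (0 : ℤ) (2 * (n : ℤ)), h k : ℕ) : ℚ) - (h n : ℚ)) / 2 := by
  obtain ⟨t, rfl⟩ : ∃ t, s = t + 1 :=
    Nat.exists_eq_add_one.2 (Nat.pos_of_ne_zero (by rintro rfl; omega))
  have hc2 : n + 2 ≤ 2 * c := by obtain ⟨a, rfl⟩ := hneven; omega
  set r := ∑ k ∈ Icc 0 (2 * (n : ℤ)), h k
  set T := ∑ k ∈ Icc 0 (n : ℤ), h k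
  have hodd : h (n + 1) = 0 := hlac _ (by exact_mod_cast hneven.add_one)
  have hsum :
      ∑ m ∈ Icc (2 * (c : ℤ) - n) (2 * ((t : ℤ) + 1) * c + 1), b m = t • r + T := by
    refine (sum_congr rfl fun m hm => ?_).trans (sum_Icc_sum_range_shift_eq hsupp hodd hc2 t)
    rw [hb, tsum_shift_eq_sum_range fun k hk => hsupp k (.inl hk)]
    have hc2Z : (n : ℤ) + 2 ≤ 2 * c := by exact_mod_cast hc2
    push_cast
    linarith [(mem_Icc.1 hm).2]
  have hhalf : T + T = r + h n := sum_Icc_add_sum_Icc_of_palindromic (Int.natCast_nonneg n) hdual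
  rw [Nat.cast_succ, hsum, smul_eq_mul]
  rify at hhalf ⊢
  linarith

/-- Equation (sumb_m-even): for even `n`, `c > n/2`, lacunary Betti numbers `h` of the base,
the truncated Betti sum (up to degree `2sc+1`) equals `s·r − (r − h n)/2`. -/
theorem stmt_2 (n c s : ℕ) (hn : 2 ≤ n) (hneven : Even n) (hc : n < 2 * c)
    (h : ℤ → ℕ) (b : ℤ → ℕ)
    (hsupp : ∀ k : ℤ, (k < 0 ∨ (2 * (n : ℤ)) < k) → h k = 0)
    (hdual : ∀ k : ℤ, h k = h (2 * (n : ℤ) - k))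
    (hlac : ∀ k : ℤ, Odd k → h k = 0)
    (hb : ∀ x : ℤ, b x = ∑' m : ℕ, h (x - 2 * ((m : ℤ) + 1) * (c : ℤ) + (n : ℤ)))
    (hs : 2 * n < 2 * s * c) :
    ((∑ m ∈ Finset.Icc (2 * (c : ℤ) - (n : ℤ)) (2 * (s : ℤ) * (c : ℤ) + 1), b m : ℕ) : ℚ) =
      (s : ℚ) * (∑ k ∈ Finset.Icc (0 : ℤ) (2 * (n : ℤ)), h k : ℕ) -
        (((∑ k ∈ Finset.Icc (0 : ℤ) (2 * (n : ℤ)), h k : ℕ) : ℚ) - (h n : ℚ)) / 2 :=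
  stmt_2_general n c s hneven hc h b hsupp hdual hlac hb hs
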